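/- arXiv:1909.06079 — 3 statements merged into one kernel-verified Lean document; each statement's English description precedes it below -/
import Mathlib

section
/- For every cube Q in ℝ^d there exists an index i ∈ {1,...,2^d} and a cube Q_i belonging to the i-th shifted dyadic grid D_i such that Q ⊆ Q_i and the side length of Q_i is at most 6 times the side length of Q. -/
/-!
In each coordinate the cube projects to an interval `[a, a + ℓ)`, and we work at the dyadic scale
`L ∈ [3ℓ, 6ℓ]`. Either `[a, a + ℓ)` lies in a cell of `Lℤ`, or it contains a point of `Lℤ` that
sits within `ℓ ≤ L/3` of its right end; then `a` is in the last third of its cell, and the grid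
`Lℤ ± L/3` (whatever the sign `(-1)^k`) has a cell containing the whole interval.
-/

def Cube (d : ℕ) (c : Fin d → ℝ) (l : ℝ) : Set (Fin d → ℝ) :=
  {x | ∀ i, c i ≤ x i ∧ x i < c i + l}

lemma cube_subset_cube {d : ℕ} {c c' : Fin d → ℝ} {l l' : ℝ}
    (h : ∀ i, c' i ≤ c i ∧ c i + l ≤ c' i + l') : Cube d c l ⊆ Cube d c' l' :=
  fun _ hx i => ⟨(h i).1.trans (hx i).1, (hx i).2.trans_le (h i).2⟩

lemma neg_one_zpow_eq_or (R : Type*) [DivisionRing R] (k : ℤ) :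
    (-1 : R) ^ k = 1 ∨ (-1 : R) ^ k = -1 :=
  (Int.even_or_odd k).imp Even.neg_one_zpow Odd.neg_one_zpow

lemma exists_zpow_mem_Icc {K : Type*} [Semifield K] [LinearOrder K] [IsStrictOrderedRing K]
    [Archimedean K] [ExistsAddOfLE K] {x b : K} (hx : 0 < x) (hb : 1 < b) :
    ∃ n : ℤ, b ^ n ∈ Set.Icc x (b * x) := by
  obtain ⟨n, hlt, hle⟩ := exists_mem_Ioc_zpow hx hb
  refine ⟨n + 1, hle, ?_⟩
  rw [zpow_add_one₀ (by positivity), mul_comm]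
  exact mul_le_mul_of_nonneg_left hlt.le (by positivity)

lemma exists_shifted_unit_cell (u s ε : ℝ) (hs : s ≤ 1 / 3) (hε : ε = 1 ∨ ε = -1) :
    ∃ (b : Bool) (j : ℤ), (j : ℝ) + ε * (if b then 1 / 3 else 0) ≤ u ∧
      u + s ≤ (j : ℝ) + ε * (if b then 1 / 3 else 0) + 1 := by
  have hfloor := Int.floor_le u
  have hceil := Int.lt_floor_add_one u
  by_cases hfit : u + s ≤ ⌊u⌋ + 1
  · exact ⟨false, ⌊u⌋, by simpa using hfloor, by simpa using hfit⟩
  rcases hε with rfl | rfl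
  · refine ⟨true, ⌊u⌋, ?_, ?_⟩ <;> simp only [if_true] <;> linarith
  · refine ⟨true, ⌊u⌋ + 1, ?_, ?_⟩ <;> push_cast <;> simp only [if_true] <;> linarith

lemma exists_shifted_cell (a l L ε : ℝ) (hL : 0 < L) (h3 : 3 * l ≤ L) (hε : ε = 1 ∨ ε = -1) :
    ∃ (b : Bool) (j : ℤ), L * ((j : ℝ) + ε * (if b then 1 / 3 else 0)) ≤ a ∧
      a + l ≤ L * ((j : ℝ) + ε * (if b then 1 / 3 else 0)) + L := by
  have hs : l / L ≤ 1 / 3 := by rw [div_le_iff₀ hL]; linarith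
  obtain ⟨b, j, hleft, hright⟩ := exists_shifted_unit_cell (a / L) (l / L) ε hs hε
  refine ⟨b, j, ?_, ?_⟩
  · rwa [le_div_iff₀' hL] at hleft
  · rw [← add_div, div_le_iff₀ hL] at hright
    linarith

/-- Every cube `Q` in `ℝ^d` is contained in a cube of one of the `2^d` shifted dyadic grids
`D_t = {2^{-k}([0,1)^d + j + (-1)^k t) : k ∈ ℤ, j ∈ ℤ^d}`, `t ∈ {0,1/3}^d`,
whose side length is at most `6 ℓ(Q)`. -/
theorem shifted_dyadic_cover (d : ℕ) (c : Fin d → ℝ) (l : ℝ) (hl : 0 < l) :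
    ∃ (t : Fin d → Bool) (k : ℤ) (j : Fin d → ℤ),
      Cube d c l ⊆
        Cube d
          (fun i => (2:ℝ) ^ (-k) * ((j i : ℝ) + (-1 : ℝ) ^ k * (if t i then 1/3 else 0)))
          ((2:ℝ) ^ (-k)) ∧
      (2:ℝ) ^ (-k) ≤ 6 * l := by
  obtain ⟨n, h3l, h6l⟩ := exists_zpow_mem_Icc (by positivity : 0 < 3 * l) one_lt_two
  have hcell i := exists_shifted_cell (c i) l (2 ^ n) ((-1) ^ (-n)) (by positivity) h3l
    (neg_one_zpow_eq_or ℝ (-n))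
  choose t j hj using hcell
  refine ⟨t, -n, j, ?_, ?_⟩ <;> rw [neg_neg]
  · exact cube_subset_cube hj
  · linarith
end

section
/- If the multilinear maximal operator satisfies the two-weight strong type bound ‖M(f_1 σ_1, ..., f_m σ_m)‖_{L^p(ω)} ≤ C ∏_{i=1}^m ‖f_i‖_{L^{p_i}(σ_i)} for all f_i ∈ L^{p_i}(σ_i), then the weights satisfy the joint A_{\vec p} condition: sup_Q (|Q|^{-1} ∫_Q ω) ∏_{i=1}^m (|Q|^{-1} ∫_Q σ_i)^{p/p_i'} < ∞, with constant controlled by C^p. -/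
/-!
Test the strong type bound on `fᵢ = 1_Q`. On `Q` the maximal function is at least the product of
the averages `σᵢ(Q)/|Q|`, so `(∏ᵢ σᵢ(Q)/|Q|) ω(Q)^{1/p} ≤ C ∏ᵢ σᵢ(Q)^{1/pᵢ}`. Raising to the power
`p` and using `∑ᵢ p/pᵢ = 1` to split `(σᵢ(Q)/|Q|)^p = (σᵢ(Q)/|Q|)^{p/pᵢ'} (σᵢ(Q)/|Q|)^{p/pᵢ}`,
the factor `∏ᵢ σᵢ(Q)^{p/pᵢ}` cancels and leaves the `A_{p⃗}` bound.
-/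

open MeasureTheory ENNReal

noncomputable section

/-- The multilinear maximal operator `M(f₁,…,f_m)(x) = sup_{Q ∋ x} ∏ᵢ |Q|⁻¹ ∫_Q fᵢ`. -/
def mMax (d m : ℕ) (f : Fin m → (Fin d → ℝ) → ℝ≥0∞) (x : Fin d → ℝ) : ℝ≥0∞ :=
  ⨆ (c : Fin d → ℝ) (l : ℝ) (_ : 0 < l) (_ : x ∈ Cube d c l),
    ∏ i, (∫⁻ y in Cube d c l, f i y) / volume (Cube d c l)

namespace ENNReal

theorem rpow_sum_of_nonneg {ι : Type*} (x : ℝ≥0∞) {s : Finset ι} {f : ι → ℝ}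
    (hf : ∀ i ∈ s, 0 ≤ f i) : x ^ (∑ i ∈ s, f i) = ∏ i ∈ s, x ^ f i := by
  classical
  induction s using Finset.induction with
  | empty => simp
  | insert j s hj ih =>
    rw [Finset.sum_insert hj, Finset.prod_insert hj,
      rpow_add_of_nonneg _ _ (hf j (s.mem_insert_self j))
        (Finset.sum_nonneg fun i hi => hf i (Finset.mem_insert_of_mem hi)),
      ih fun i hi => hf i (Finset.mem_insert_of_mem hi)]

end ENNReal

section Cube

variable {d : ℕ} {c : Fin d → ℝ} {l : ℝ}

theorem cube_eq_pi : Cube d c l = Set.univ.pi fun i => Set.Ico (c i) (c i + l) := by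
  ext x
  simp [Cube, Set.mem_pi]

theorem measurableSet_cube : MeasurableSet (Cube d c l) := by
  rw [cube_eq_pi]
  exact MeasurableSet.univ_pi fun _ => measurableSet_Ico

end Cube

section MaximalFunction

variable {d m : ℕ} {c : Fin d → ℝ} {l : ℝ}

theorem prod_setLAverage_le_mMax (f : Fin m → (Fin d → ℝ) → ℝ≥0∞) (hl : 0 < l)
    {x : Fin d → ℝ} (hx : x ∈ Cube d c l) :
    ∏ i, (∫⁻ y in Cube d c l, f i y) / volume (Cube d c l) ≤ mMax d m f x :=
  le_iSup_of_le c <| le_iSup_of_le l <| le_iSup_of_le hl <| le_iSup_of_le hx le_rfl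

theorem prod_setLAverage_le_mMax_indicator_mul (σ : Fin m → (Fin d → ℝ) → ℝ≥0∞) (hl : 0 < l)
    {x : Fin d → ℝ} (hx : x ∈ Cube d c l) :
    ∏ i, (∫⁻ y in Cube d c l, σ i y) / volume (Cube d c l)
      ≤ mMax d m (fun i y => (Cube d c l).indicator 1 y * σ i y) x := by
  refine le_of_eq_of_le (Finset.prod_congr rfl fun i _ => ?_) (prod_setLAverage_le_mMax _ hl hx)
  refine congrArg (· / _) (setLIntegral_congr_fun measurableSet_cube fun y hy => ?_)
  simp [Set.indicator_of_mem hy]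

theorem prod_setLAverage_rpow_mul_le_lintegral_mMax_rpow_mul
    (σ : Fin m → (Fin d → ℝ) → ℝ≥0∞) (ω : (Fin d → ℝ) → ℝ≥0∞) {p : ℝ} (hp : 0 ≤ p)
    (hl : 0 < l) :
    (∏ i, (∫⁻ y in Cube d c l, σ i y) / volume (Cube d c l)) ^ p * ∫⁻ x in Cube d c l, ω x
      ≤ ∫⁻ x, mMax d m (fun i y => (Cube d c l).indicator 1 y * σ i y) x ^ p * ω x :=
  calc _ ≤ ∫⁻ x in Cube d c l,
          (∏ i, (∫⁻ y in Cube d c l, σ i y) / volume (Cube d c l)) ^ p * ω x :=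
        lintegral_const_mul_le _ _
    _ ≤ ∫⁻ x in Cube d c l,
          mMax d m (fun i y => (Cube d c l).indicator 1 y * σ i y) x ^ p * ω x :=
        setLIntegral_mono' measurableSet_cube fun _ hx =>
          mul_le_mul_left (rpow_le_rpow (prod_setLAverage_le_mMax_indicator_mul σ hl hx) hp) _
    _ ≤ _ := setLIntegral_le_lintegral _ _

end MaximalFunction

theorem lintegral_indicator_rpow_mul {α : Type*} [MeasurableSpace α] {μ : Measure α} {s : Set α}
    (hs : MeasurableSet s) (σ : α → ℝ≥0∞) {q : ℝ} (hq : 0 < q) :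
    ∫⁻ x, s.indicator 1 x ^ q * σ x ∂μ = ∫⁻ x in s, σ x ∂μ := by
  rw [← lintegral_indicator hs]
  congr with x
  by_cases hx : x ∈ s <;> simp [hx, zero_rpow_of_pos hq]

section Algebra

variable {ι : Type*} [Fintype ι] {p : ℝ} {q : ι → ℝ} {S : ι → ℝ≥0∞} {V : ℝ≥0∞}

theorem prod_div_rpow_mul_eq (hp : 0 ≤ p) (hq : ∀ i, 1 ≤ q i) (hsum : ∑ i, p / q i = 1)
    (W : ℝ≥0∞) :
    (∏ i, S i / V) ^ p * W
      = (W / V * ∏ i, (S i / V) ^ (p * (q i - 1) / q i)) * ∏ i, S i ^ (p / q i) := by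
  have hq0 : ∀ i, 0 < q i := fun i => one_pos.trans_le (hq i)
  have hsmall : ∀ i, 0 ≤ p / q i := fun i => div_nonneg hp (hq0 i).le
  have hlarge : ∀ i, 0 ≤ p * (q i - 1) / q i := fun i =>
    div_nonneg (mul_nonneg hp (sub_nonneg.2 (hq i))) (hq0 i).le
  have hsplit : ∀ i, (S i / V) ^ p
      = (S i / V) ^ (p * (q i - 1) / q i) * (S i ^ (p / q i) * V⁻¹ ^ (p / q i)) := by
    intro i
    rw [div_eq_mul_inv (S i), ← mul_rpow_of_nonneg _ _ (hsmall i),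
      ← rpow_add_of_nonneg _ _ (hlarge i) (hsmall i)]
    congr 1
    field_simp [(hq0 i).ne']
    ring
  have hvol : ∏ i, V⁻¹ ^ (p / q i) = V⁻¹ := by
    rw [← rpow_sum_of_nonneg _ fun i _ => hsmall i, hsum, rpow_one]
  rw [← prod_rpow_of_nonneg hp, Finset.prod_congr rfl fun i _ => hsplit i,
    Finset.prod_mul_distrib, Finset.prod_mul_distrib, hvol, div_eq_mul_inv W]
  ring

theorem div_mul_prod_div_rpow_le_rpow_of_le (hp : 0 < p) (hq : ∀ i, 1 < q i)
    (hsum : 1 / p = ∑ i, 1 / q i) (hS : ∀ i, S i ≠ ∞) {W C : ℝ≥0∞}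
    (h : ((∏ i, S i / V) ^ p * W) ^ (1 / p) ≤ C * ∏ i, S i ^ (1 / q i)) :
    W / V * ∏ i, (S i / V) ^ (p * (q i - 1) / q i) ≤ C ^ p := by
  have hq0 : ∀ i, 0 < q i := fun i => one_pos.trans (hq i)
  by_cases hS0 : ∃ i, S i = 0
  · obtain ⟨i, hi⟩ := hS0
    have hexp : 0 < p * (q i - 1) / q i := div_pos (mul_pos hp (sub_pos.2 (hq i))) (hq0 i)
    have hfactor : (S i / V) ^ (p * (q i - 1) / q i) = 0 := by
      rw [hi, ENNReal.zero_div, zero_rpow_of_pos hexp]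
    rw [Finset.prod_eq_zero (Finset.mem_univ i) hfactor, mul_zero]
    exact zero_le
  push Not at hS0
  have hsum' : ∑ i, p / q i = 1 := by
    simp_rw [div_eq_mul_one_div p, ← Finset.mul_sum, ← hsum, mul_one_div_cancel hp.ne']
  rw [one_div p, rpow_inv_le_iff hp, prod_div_rpow_mul_eq hp.le (fun i => (hq i).le) hsum',
    mul_rpow_of_nonneg _ _ hp.le, ← prod_rpow_of_nonneg hp.le] at h
  simp_rw [← rpow_mul, one_div_mul_eq_div] at h
  refine (ENNReal.mul_le_mul_iff_left ?_ ?_).1 h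
  · exact Finset.prod_ne_zero_iff.2 fun i _ => (rpow_pos (pos_iff_ne_zero.2 (hS0 i)) (hS i)).ne'
  · exact (prod_lt_top fun i _ => rpow_lt_top_of_nonneg (div_pos hp (hq0 i)).le (hS i)).ne

end Algebra

theorem strong_bound_implies_Ap_general (d m : ℕ) (hm : 0 < m)
    (p : ℝ) (pp : Fin m → ℝ) (hpp : ∀ i, 1 < pp i)
    (hp : 1 / p = ∑ i, 1 / pp i)
    (ω : (Fin d → ℝ) → ℝ≥0∞) (σ : Fin m → (Fin d → ℝ) → ℝ≥0∞)
    (hloc : ∀ (i : Fin m) (c : Fin d → ℝ) (l : ℝ), (∫⁻ x in Cube d c l, σ i x) < ∞)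
    (C : ℝ≥0∞)
    (hbdd : ∀ f : Fin m → (Fin d → ℝ) → ℝ≥0∞, (∀ i, Measurable (f i)) →
      (∫⁻ x, (mMax d m (fun i y => f i y * σ i y) x) ^ p * ω x) ^ (1 / p)
        ≤ C * ∏ i, (∫⁻ x, (f i x) ^ (pp i) * σ i x) ^ (1 / pp i)) :
    ∀ (c : Fin d → ℝ) (l : ℝ), 0 < l →
      ((∫⁻ x in Cube d c l, ω x) / volume (Cube d c l))
          * ∏ i, ((∫⁻ x in Cube d c l, σ i x) / volume (Cube d c l))
              ^ (p * (pp i - 1) / pp i)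
        ≤ C ^ p := by
  intro c l hl
  have hp0 : 0 < p := by
    have : Nonempty (Fin m) := Fin.pos_iff_nonempty.1 hm
    refine one_div_pos.1 (hp ▸ Finset.sum_pos (fun i _ => ?_) Finset.univ_nonempty)
    exact one_div_pos.2 (one_pos.trans (hpp i))
  refine div_mul_prod_div_rpow_le_rpow_of_le hp0 hpp hp (fun i => (hloc i c l).ne) ?_
  have htest := hbdd (fun _ => (Cube d c l).indicator 1)
    (fun _ => measurable_one.indicator measurableSet_cube)
  simp only [lintegral_indicator_rpow_mul measurableSet_cube _ (one_pos.trans (hpp _))] at htest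
  exact (rpow_le_rpow (prod_setLAverage_rpow_mul_le_lintegral_mMax_rpow_mul σ ω hp0.le hl)
    (by positivity)).trans htest

/-- The two-weight strong type bound
`‖M(f₁σ₁,…,f_mσ_m)‖_{L^p(ω)} ≤ C ∏ᵢ ‖fᵢ‖_{L^{pᵢ}(σᵢ)}` implies the joint `A_{p⃗}` condition:
for every cube `Q`, `(avg_Q ω) ∏ᵢ (avg_Q σᵢ)^{p/pᵢ'} ≤ C^p`. -/
theorem strong_bound_implies_Ap (d m : ℕ) (hm : 0 < m)
    (p : ℝ) (pp : Fin m → ℝ) (hpp : ∀ i, 1 < pp i)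
    (hp : 1 / p = ∑ i, 1 / pp i)
    (ω : (Fin d → ℝ) → ℝ≥0∞) (σ : Fin m → (Fin d → ℝ) → ℝ≥0∞)
    (hω : Measurable ω) (hσ : ∀ i, Measurable (σ i))
    (hloc : ∀ (i : Fin m) (c : Fin d → ℝ) (l : ℝ), (∫⁻ x in Cube d c l, σ i x) < ∞)
    (C : ℝ≥0∞)
    (hbdd : ∀ f : Fin m → (Fin d → ℝ) → ℝ≥0∞, (∀ i, Measurable (f i)) →
      (∫⁻ x, (mMax d m (fun i y => f i y * σ i y) x) ^ p * ω x) ^ (1 / p)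
        ≤ C * ∏ i, (∫⁻ x, (f i x) ^ (pp i) * σ i x) ^ (1 / pp i)) :
    ∀ (c : Fin d → ℝ) (l : ℝ), 0 < l →
      ((∫⁻ x in Cube d c l, ω x) / volume (Cube d c l))
          * ∏ i, ((∫⁻ x in Cube d c l, σ i x) / volume (Cube d c l))
              ^ (p * (pp i - 1) / pp i)
        ≤ C ^ p :=
  strong_bound_implies_Ap_general d m hm p pp hpp hp ω σ hloc C hbdd
end
end

section
/- Let Q ⊂ R be a dyadic cube with R = Q^{(n)} (the n-th dyadic ancestor of Q). Suppose that for each 0 ≤ j < n and each 1 ≤ i ≤ m we have σ_i(Q^{(j+1)}) > D σ_i(Q^{(j)}), where D = 2^{2mpd/(mp-1)}. Then the joint A_{\vec p} expression at R satisfies (|R|^{-1}∫_R ω) ∏_{i=1}^m (|R|^{-1}∫_R σ_i)^{p/p_i'} ≥ 2^{dmnp} · (|Q|^{-1}∫_Q ω) ∏_{i=1}^m (|Q|^{-1}∫_Q σ_i)^{p/p_i'}. -/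
/-! The `A_{p⃗}` expression is homogeneous: multiplying the volume by `2^d` and every `σᵢ`-mass by
`D = 2^{2mpd/(mp-1)}` multiplies it by `2^{-d} · (D / 2^d)^{Σ p/pᵢ'} = 2^{-d} · (D / 2^d)^{mp-1}
= 2^{dmp}`. Since the `ω`-mass can only grow and the `σᵢ`-masses grow by more than `D`, each
step up the chain gains at least `2^{dmp}`, and `n` steps gain `2^{dmnp}`. -/

open MeasureTheory ENNReal

namespace ENNReal

theorem prod_rpow_eq_rpow_sum {ι : Type*} (s : Finset ι) {t : ℝ≥0∞} (ht0 : t ≠ 0) (ht : t ≠ ∞)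
    (f : ι → ℝ) : ∏ i ∈ s, t ^ f i = t ^ (∑ i ∈ s, f i) := by
  induction s using Finset.cons_induction with
  | empty => simp
  | cons a s ha ih => rw [Finset.prod_cons, Finset.sum_cons, ih, ← rpow_add _ _ ht0 ht]

theorem div_rpow_mul {t : ℝ≥0∞} (ht0 : t ≠ 0) (ht : t ≠ ∞) (δ : ℝ) (X V : ℝ≥0∞) :
    X / (t ^ δ * V) = t ^ (-δ) * (X / V) := by
  have hpos : t ^ δ ≠ 0 := (rpow_pos (pos_iff_ne_zero.2 ht0) ht).ne'
  rw [div_eq_mul_inv, ENNReal.mul_inv (.inl hpos) (.inl (rpow_ne_top_of_ne_zero ht0 ht)),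
    ← rpow_neg, div_eq_mul_inv]
  ring

end ENNReal

theorem sum_mul_sub_one_div_eq {ι : Type*} [Fintype ι] {p : ℝ} (hp0 : p ≠ 0) (pp : ι → ℝ)
    (hpp : ∀ i, pp i ≠ 0) (hp : 1 / p = ∑ i, 1 / pp i) :
    ∑ i, p * (pp i - 1) / pp i = Fintype.card ι * p - 1 := by
  have hterm : ∀ i, p * (pp i - 1) / pp i = p - p * (1 / pp i) := fun i => by
    field_simp [hpp i]
  simp only [hterm, Finset.sum_sub_distrib, Finset.sum_const, ← Finset.mul_sum, ← hp,
    Finset.card_univ, nsmul_eq_mul, mul_one_div_cancel hp0]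

section ApAverage

variable {ι : Type*} [Fintype ι]

/-- The joint `A_{p⃗}` expression of a cube of volume `V`, `ω`-mass `W` and `σᵢ`-masses `Sᵢ`,
with `eᵢ = p / pᵢ'`. -/
noncomputable def apAverage (e : ι → ℝ) (W V : ℝ≥0∞) (S : ι → ℝ≥0∞) : ℝ≥0∞ :=
  W / V * ∏ i, (S i / V) ^ e i

theorem apAverage_mono {e : ι → ℝ} (he : ∀ i, 0 ≤ e i) {W W' V : ℝ≥0∞} {S S' : ι → ℝ≥0∞}
    (hW : W ≤ W') (hS : ∀ i, S i ≤ S' i) : apAverage e W V S ≤ apAverage e W' V S' := by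
  unfold apAverage
  gcongr with i
  · exact he i
  · exact hS i

theorem apAverage_rpow_mul {e : ι → ℝ} (he : ∀ i, 0 ≤ e i) {t : ℝ≥0∞} (ht0 : t ≠ 0)
    (ht : t ≠ ∞) (δ a : ℝ) (W V : ℝ≥0∞) (S : ι → ℝ≥0∞) :
    apAverage e W (t ^ δ * V) (fun i => t ^ a * S i)
      = t ^ (-δ + (a - δ) * ∑ i, e i) * apAverage e W V S := by
  have hfactor : ∀ i,
      (t ^ a * S i / (t ^ δ * V)) ^ e i = t ^ ((a - δ) * e i) * (S i / V) ^ e i := by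
    intro i
    rw [ENNReal.div_rpow_mul ht0 ht, mul_div_assoc, ← mul_assoc, ← rpow_add _ _ ht0 ht,
      mul_rpow_of_nonneg _ _ (he i), ← rpow_mul, neg_add_eq_sub]
  rw [apAverage, apAverage, Finset.prod_congr rfl fun i _ => hfactor i, Finset.prod_mul_distrib,
    ENNReal.prod_rpow_eq_rpow_sum _ ht0 ht, ← Finset.mul_sum, ENNReal.div_rpow_mul ht0 ht,
    rpow_add _ _ ht0 ht]
  ring

variable {e : ι → ℝ} {q : ℝ}

theorem apAverage_step (he : ∀ i, 0 ≤ e i) (hq : 1 < q) (hsum : ∑ i, e i = q - 1) (d : ℕ)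
    {W W' V : ℝ≥0∞} {S S' : ι → ℝ≥0∞} (hW : W ≤ W')
    (hS : ∀ i, (2 : ℝ≥0∞) ^ (2 * q * d / (q - 1)) * S i ≤ S' i) :
    2 ^ ((d : ℝ) * q) * apAverage e W V S ≤ apAverage e W' (2 ^ d * V) S' := by
  have hexp : -(d : ℝ) + (2 * q * d / (q - 1) - d) * (q - 1) = d * q := by
    field_simp [(sub_pos.2 hq).ne']
    ring
  calc 2 ^ ((d : ℝ) * q) * apAverage e W V S
      = apAverage e W (2 ^ (d : ℝ) * V) (fun i => 2 ^ (2 * q * d / (q - 1)) * S i) := by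
        rw [apAverage_rpow_mul he two_ne_zero ofNat_ne_top, hsum, hexp]
    _ ≤ apAverage e W' (2 ^ d * V) S' := by
        rw [rpow_natCast]
        exact apAverage_mono he hW hS

theorem apAverage_le_of_chain (he : ∀ i, 0 ≤ e i) (hq : 1 < q) (hsum : ∑ i, e i = q - 1)
    (d n : ℕ) {W V : ℕ → ℝ≥0∞} {S : ℕ → ι → ℝ≥0∞} (hW : ∀ j, W j ≤ W (j + 1))
    (hV : ∀ j, V (j + 1) = 2 ^ d * V j)
    (hS : ∀ j < n, ∀ i, (2 : ℝ≥0∞) ^ (2 * q * d / (q - 1)) * S j i ≤ S (j + 1) i) :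
    2 ^ ((d : ℝ) * q * n) * apAverage e (W 0) (V 0) (S 0) ≤ apAverage e (W n) (V n) (S n) := by
  induction n with
  | zero => simp
  | succ n ih =>
    calc 2 ^ ((d : ℝ) * q * (n + 1 : ℕ)) * apAverage e (W 0) (V 0) (S 0)
        = 2 ^ ((d : ℝ) * q) * (2 ^ ((d : ℝ) * q * n) * apAverage e (W 0) (V 0) (S 0)) := by
          rw [← mul_assoc, ← rpow_add _ _ two_ne_zero ofNat_ne_top]
          push_cast
          ring_nf
      _ ≤ 2 ^ ((d : ℝ) * q) * apAverage e (W n) (V n) (S n) :=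
          mul_le_mul_right (ih fun j hj => hS j (Nat.lt_succ_of_lt hj)) _
      _ ≤ apAverage e (W (n + 1)) (V (n + 1)) (S (n + 1)) := by
          rw [hV n]
          exact apAverage_step he hq hsum d (hW n) (hS n n.lt_succ_self)

end ApAverage

theorem ancestor_doubling_Ap_growth_general (d m n : ℕ)
    (p : ℝ) (pp : Fin m → ℝ) (hpp : ∀ i, 1 < pp i)
    (hp : 1 / p = ∑ i, 1 / pp i) (hmp : 1 < (m : ℝ) * p)
    (ω : (Fin d → ℝ) → ℝ≥0∞) (σ : Fin m → (Fin d → ℝ) → ℝ≥0∞)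
    (Qc : ℕ → Set (Fin d → ℝ))
    (hsub : ∀ j, Qc j ⊆ Qc (j + 1))
    (hvol : ∀ j, volume (Qc (j + 1)) = 2 ^ d * volume (Qc j))
    (hD : ∀ j < n, ∀ i,
      (2 : ℝ≥0∞) ^ ((2 * (m : ℝ) * p * (d : ℝ)) / ((m : ℝ) * p - 1))
          * (∫⁻ x in Qc j, σ i x)
        < ∫⁻ x in Qc (j + 1), σ i x) :
    (2 : ℝ≥0∞) ^ ((d : ℝ) * (m : ℝ) * (n : ℝ) * p) *
        (((∫⁻ x in Qc 0, ω x) / volume (Qc 0))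
          * ∏ i, ((∫⁻ x in Qc 0, σ i x) / volume (Qc 0)) ^ (p * (pp i - 1) / pp i))
      ≤ ((∫⁻ x in Qc n, ω x) / volume (Qc n))
          * ∏ i, ((∫⁻ x in Qc n, σ i x) / volume (Qc n)) ^ (p * (pp i - 1) / pp i) := by
  have hp0 : 0 < p := pos_of_mul_pos_right (one_pos.trans hmp) m.cast_nonneg
  have he : ∀ i, 0 ≤ p * (pp i - 1) / pp i := fun i =>
    div_nonneg (mul_nonneg hp0.le (sub_nonneg.2 (hpp i).le)) (one_pos.trans (hpp i)).le
  have hsum := sum_mul_sub_one_div_eq hp0.ne' pp (fun i => (one_pos.trans (hpp i)).ne') hp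
  rw [Fintype.card_fin] at hsum
  have hchain := apAverage_le_of_chain he hmp hsum d n (W := fun j => ∫⁻ x in Qc j, ω x)
    (V := fun j => volume (Qc j)) (S := fun j i => ∫⁻ x in Qc j, σ i x)
    (fun j => lintegral_mono_set (hsub j)) hvol
    (fun j hj i => by simpa only [mul_assoc] using (hD j hj i).le)
  rwa [show (d : ℝ) * m * (n : ℝ) * p = d * (m * p) * n by ring]

/-- Along a chain of dyadic ancestors `Q = Qc 0 ⊂ Qc 1 ⊂ ⋯ ⊂ Qc n = R`, if every σᵢ grows by
more than the factor `D = 2^{2mpd/(mp-1)}` at each step, then the joint `A_{p⃗}` expression at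
`R` dominates `2^{dmnp}` times the one at `Q`. -/
theorem ancestor_doubling_Ap_growth (d m n : ℕ) (hd : 0 < d) (hm : 0 < m)
    (p : ℝ) (pp : Fin m → ℝ) (hpp : ∀ i, 1 < pp i)
    (hp : 1 / p = ∑ i, 1 / pp i) (hmp : 1 < (m : ℝ) * p)
    (ω : (Fin d → ℝ) → ℝ≥0∞) (σ : Fin m → (Fin d → ℝ) → ℝ≥0∞)
    (hω : Measurable ω) (hσ : ∀ i, Measurable (σ i))
    (Qc : ℕ → Set (Fin d → ℝ)) (hQmeas : ∀ j, MeasurableSet (Qc j))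
    (hsub : ∀ j, Qc j ⊆ Qc (j + 1))
    (hvol : ∀ j, volume (Qc (j + 1)) = 2 ^ d * volume (Qc j))
    (hvol0 : 0 < volume (Qc 0)) (hvoln : volume (Qc n) < ∞)
    (hωfin : (∫⁻ x in Qc n, ω x) < ∞) (hσfin : ∀ i, (∫⁻ x in Qc n, σ i x) < ∞)
    (hD : ∀ j < n, ∀ i,
      (2 : ℝ≥0∞) ^ ((2 * (m : ℝ) * p * (d : ℝ)) / ((m : ℝ) * p - 1))
          * (∫⁻ x in Qc j, σ i x)
        < ∫⁻ x in Qc (j + 1), σ i x) :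
    (2 : ℝ≥0∞) ^ ((d : ℝ) * (m : ℝ) * (n : ℝ) * p) *
        (((∫⁻ x in Qc 0, ω x) / volume (Qc 0))
          * ∏ i, ((∫⁻ x in Qc 0, σ i x) / volume (Qc 0)) ^ (p * (pp i - 1) / pp i))
      ≤ ((∫⁻ x in Qc n, ω x) / volume (Qc n))
          * ∏ i, ((∫⁻ x in Qc n, σ i x) / volume (Qc n)) ^ (p * (pp i - 1) / pp i) :=
  ancestor_doubling_Ap_growth_general d m n p pp hpp hp hmp ω σ Qc hsub hvol hD
end
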